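/- arXiv:0909.2800 — 2 statements merged into one kernel-verified Lean document; each statement's English description precedes it below -/
import Mathlib

section
/- Let 𝕂 be ℝ or ℂ, let r, n be positive integers, and let ω = (ω_1,…,ω_n) ∈ {1,…,r}^n be a word that is not equal to a power of a shorter word. Then there exists an irreducible r-tuple 𝒜 = (A_1,…,A_r) of n×n matrices over 𝕂 such that 𝒜 satisfies the strong finiteness hypothesis with characteristic word ω, the matrices A_1,…,A_r are pairwise distinct, and the matrix A_{ω_n}⋯A_{ω_1} has rank one. -/
open Filter Topology

noncomputable section

namespace JSRPaper

variable {𝕂 : Type*} [RCLike 𝕂] {ι : Type*} [Fintype ι] [DecidableEq ι] {r : ℕ}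

/-- The Euclidean operator norm of a matrix, i.e. the operator norm induced by the
Euclidean norm on `𝕂^ι`. -/
noncomputable def eNorm (A : Matrix ι ι 𝕂) : ℝ :=
  ‖Matrix.toEuclideanCLM (𝕜 := 𝕂) A‖

/-- The product `A_{i n} ⋯ A_{i 1}` associated to the word `i : Fin n → Fin r`. -/
noncomputable def wordProd (A : Fin r → Matrix ι ι 𝕂) {n : ℕ} (i : Fin n → Fin r) :
    Matrix ι ι 𝕂 :=
  ((List.ofFn fun k => A (i k)).reverse).prod

/-- The joint spectral radius of the tuple `A`, expressed via the standard
characterisation `ϱ(𝒜) = inf_n max_{|i| = n} ‖A_{i_n} ⋯ A_{i_1}‖^{1/n}`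
(the infimum equals the limit). -/
noncomputable def jsr (A : Fin r → Matrix ι ι 𝕂) : ℝ :=
  ⨅ n : ℕ+, (⨆ i : Fin (n : ℕ) → Fin r, eNorm (wordProd A i)) ^ ((n : ℝ)⁻¹)

/-- The spectral radius of a matrix, via Gelfand's formula
`ρ(A) = inf_k ‖A^k‖^{1/k}` (the infimum equals the limit). -/
noncomputable def specRad (A : Matrix ι ι 𝕂) : ℝ :=
  ⨅ k : ℕ+, eNorm (A ^ (k : ℕ)) ^ (((k : ℕ) : ℝ)⁻¹)

/-- `N` is a norm on `𝕂^ι`. -/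
def IsNorm (N : EuclideanSpace 𝕂 ι → ℝ) : Prop :=
  (∀ v, N v = 0 ↔ v = 0) ∧ (∀ (c : 𝕂) (v), N (c • v) = ‖c‖ * N v) ∧
    ∀ u v, N (u + v) ≤ N u + N v

/-- The operator norm of the matrix `A` induced by the norm `N` on `𝕂^ι`. -/
noncomputable def opNormWrt (N : EuclideanSpace 𝕂 ι → ℝ) (A : Matrix ι ι 𝕂) : ℝ :=
  sSup {x : ℝ | ∃ v, N v ≤ 1 ∧ x = N (Matrix.toEuclideanCLM (𝕜 := 𝕂) A v)}

/-- `N` is a Barabanov norm for the tuple `A` : it is a norm and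
`ϱ(𝒜) ‖v‖ = max_i ‖A_i v‖` for every `v`. -/
def IsBarabanov (A : Fin r → Matrix ι ι 𝕂) (N : EuclideanSpace 𝕂 ι → ℝ) : Prop :=
  IsNorm N ∧ ∀ v, jsr A * N v = ⨆ i : Fin r, N (Matrix.toEuclideanCLM (𝕜 := 𝕂) (A i) v)

/-- The tuple `A` is irreducible: no subspace of `𝕂^ι` other than `⊥` and `⊤`
is invariant under every `A i`. -/
def IsIrreducible (A : Fin r → Matrix ι ι 𝕂) : Prop :=
  ∀ V : Submodule 𝕂 (EuclideanSpace 𝕂 ι),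
    (∀ i, ∀ v ∈ V, Matrix.toEuclideanCLM (𝕜 := 𝕂) (A i) v ∈ V) → V = ⊥ ∨ V = ⊤

/-- Two words of length `n` are rotation equivalent if one is a cyclic shift of the other. -/
def RotEquiv {n : ℕ} (z w : Fin n → Fin r) : Prop :=
  ∃ k : ℕ, ∀ j : Fin n, z j = w ⟨(j.val + k) % n, Nat.mod_lt _ j.pos⟩

/-- The tuple `A` satisfies the strong finiteness hypothesis with characteristic word `ω`:
for every Barabanov norm `N` for `A`, every word of the same length as `ω` which is not
rotation equivalent to `ω` has `N`-operator-norm product strictly less than `ϱ(𝒜)^n`. -/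
def StrongFinHyp (A : Fin r → Matrix ι ι 𝕂) {n : ℕ} (ω : Fin n → Fin r) : Prop :=
  ∀ N : EuclideanSpace 𝕂 ι → ℝ, IsBarabanov A N →
    ∀ z : Fin n → Fin r, ¬ RotEquiv z ω → opNormWrt N (wordProd A z) < jsr A ^ n

/-- The tuple `A` is relatively product bounded : `ϱ(𝒜) > 0` and the set of normalised
products `ϱ(𝒜)^{-n} A_{i_n} ⋯ A_{i_1}` is bounded. -/
def RelProdBounded (A : Fin r → Matrix ι ι 𝕂) : Prop :=
  0 < jsr A ∧ ∃ C : ℝ, ∀ (n : ℕ) (i : Fin n → Fin r), eNorm (wordProd A i) ≤ C * jsr A ^ n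

/-- The limit semigroup `𝒮(𝒜) = ⋂_{m ≥ 1} closure (⋃_{n ≥ m} ϱ(𝒜)^{-n} 𝒜_n)`,
written out via the metric characterisation of the closure. -/
def limitSemigroup (A : Fin r → Matrix ι ι 𝕂) : Set (Matrix ι ι 𝕂) :=
  {B | ∀ m : ℕ, ∀ ε > (0 : ℝ), ∃ n : ℕ, m ≤ n ∧ ∃ i : Fin n → Fin r,
    eNorm ((jsr A ^ n)⁻¹ • wordProd A i - B) < ε}

/-- The tuple `A` has the rank one property: it is relatively product bounded and every
nonzero element of the limit semigroup has rank one. -/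
def RankOneProp (A : Fin r → Matrix ι ι 𝕂) : Prop :=
  RelProdBounded A ∧ ∀ B ∈ limitSemigroup A, B ≠ 0 → B.rank = 1

/-- The product `A_{i n} ⋯ A_{i 1}` along the first `n` terms of the sequence `i`
(indexed from `1`). -/
noncomputable def seqProd (A : Fin r → Matrix ι ι 𝕂) (i : ℕ → Fin r) (n : ℕ) :
    Matrix ι ι 𝕂 :=
  wordProd A fun k : Fin n => i (k.val + 1)

/-- The unbounded agreements property: any two sequences whose normalised partial
products do not tend to zero (i.e. `limsup ‖A_{i(n)} ⋯ A_{i(1)}‖ / ϱ(𝒜)^n > 0`) contain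
arbitrarily long identical blocks. -/
def UnboundedAgreements (A : Fin r → Matrix ι ι 𝕂) : Prop :=
  ∀ N : ℕ, ∀ i₁ i₂ : ℕ → Fin r,
    (∃ c > (0 : ℝ), ∀ m : ℕ, ∃ n, m ≤ n ∧ c ≤ eNorm (seqProd A i₁ n) / jsr A ^ n) →
    (∃ c > (0 : ℝ), ∀ m : ℕ, ∃ n, m ≤ n ∧ c ≤ eNorm (seqProd A i₂ n) / jsr A ^ n) →
    ∃ n₁ n₂ : ℕ, ∀ k : ℕ, 1 ≤ k → k ≤ N → i₁ (n₁ + k) = i₂ (n₂ + k)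

/-- The finiteness property: some periodic product realises the joint spectral radius,
`ρ(A_{i_n} ⋯ A_{i_1})^{1/n} = ϱ(𝒜)`. -/
def FinitenessProp (A : Fin r → Matrix ι ι 𝕂) : Prop :=
  ∃ (n : ℕ) (_ : 0 < n) (i : Fin n → Fin r),
    specRad (wordProd A i) ^ ((n : ℝ)⁻¹) = jsr A

/-- The second exterior power (second compound matrix) of a `d × d` matrix, written
in the standard basis `(e_i ∧ e_j)_{i < j}` of `⋀² 𝕂^d`. -/
noncomputable def ext2 {d : ℕ} (A : Matrix (Fin d) (Fin d) 𝕂) :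
    Matrix {p : Fin d × Fin d // p.1 < p.2} {p : Fin d × Fin d // p.1 < p.2} 𝕂 :=
  fun p q => A p.1.1 q.1.1 * A p.1.2 q.1.2 - A p.1.1 q.1.2 * A p.1.2 q.1.1

/-- The word `ω` of length `n` is a power of a shorter word. -/
def IsPowerOfShorter {n : ℕ} (ω : Fin n → Fin r) : Prop :=
  ∃ (q : ℕ) (h0 : 0 < q) (h1 : q < n), q ∣ n ∧
    ∀ j : Fin n, ω j = ω ⟨j.val % q, lt_trans (Nat.mod_lt _ h0) h1⟩

/-- `Θ_ω(𝒜)`: the supremum of `‖A_{ω_n} ⋯ A_{ω_1}‖^{1/n}` over all Barabanov norms. -/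
noncomputable def Theta {n : ℕ} (ω : Fin n → Fin r) (A : Fin r → Matrix ι ι 𝕂) : ℝ :=
  sSup {x : ℝ | ∃ N, IsBarabanov A N ∧ x = opNormWrt N (wordProd A ω) ^ ((n : ℝ)⁻¹)}

end JSRPaper

/-!
Take for `A_j` the weighted cyclic shift of `𝕂^n` moving `e_b` to `e_{b+1}` exactly at the
positions `b` with `ω_b = j` (and a small multiple of such a shift for letters missing from `ω`).
All products are weighted shifts with weights in the unit ball, so `ϱ(𝒜) = 1`. A word of length
`n` goes once around the cycle, so its product is diagonal with entry at `b` nonzero only if the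
word is `ω` read from position `b`; as a primitive word has no nonzero period, this happens for
exactly one `b`. Hence the product of `ω` is the rank-one projection onto `e_0`; the product of a
word not rotation equivalent to `ω` vanishes unless it runs through a missing letter, and then it
contracts every Barabanov norm by `1 / 2`; and an invariant subspace containing a vector with
`v_b ≠ 0` contains `e_b`, hence all its shifts.
-/

theorem Function.Periodic.nat_gcd {α : Type*} {f : ℕ → α} {a b : ℕ} (ha : Function.Periodic f a)
    (hb : Function.Periodic f b) : Function.Periodic f (a.gcd b) := by
  induction a, b using Nat.gcd.induction with
  | H0 b => simpa using hb
  | H1 a b _ ih =>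
    rw [Nat.gcd_rec]
    refine ih (fun x => ?_) ha
    rw [← ha.nat_mul (b / a) (x + b % a), Nat.cast_id, add_assoc, Nat.mod_add_div', hb]

namespace JSRPaper

open Matrix

section Norms

variable {𝕂 : Type*} [RCLike 𝕂] {ι : Type*}

theorem IsNorm.map_zero {N : EuclideanSpace 𝕂 ι → ℝ} (hN : IsNorm N) : N 0 = 0 :=
  (hN.1 0).2 rfl

theorem IsNorm.nonneg {N : EuclideanSpace 𝕂 ι → ℝ} (hN : IsNorm N) (v : EuclideanSpace 𝕂 ι) :
    0 ≤ N v := by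
  have h := hN.2.2 v (-v)
  rw [add_neg_cancel, hN.map_zero, ← neg_one_smul 𝕂 v, hN.2.1, norm_neg, norm_one,
    one_mul] at h
  linarith

variable [Fintype ι] [DecidableEq ι]

theorem IsBarabanov.apply_le {r : ℕ} {A : Fin r → Matrix ι ι 𝕂} {N : EuclideanSpace 𝕂 ι → ℝ}
    (hN : IsBarabanov A N) (i : Fin r) (v : EuclideanSpace 𝕂 ι) :
    N (toEuclideanCLM (𝕜 := 𝕂) (A i) v) ≤ jsr A * N v := by
  rw [hN.2 v]
  exact le_ciSup (f := fun i => N (toEuclideanCLM (𝕜 := 𝕂) (A i) v))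
    (Set.finite_range _).bddAbove i

theorem opNormWrt_le {N : EuclideanSpace 𝕂 ι → ℝ} {A : Matrix ι ι 𝕂} {c : ℝ} (hc : 0 ≤ c)
    (h : ∀ v, N v ≤ 1 → N (toEuclideanCLM (𝕜 := 𝕂) A v) ≤ c) : opNormWrt N A ≤ c :=
  Real.sSup_le (by rintro _ ⟨v, hv, rfl⟩; exact h v hv) hc

end Norms

section WordProd

variable {𝕂 : Type*} [RCLike 𝕂] {ι : Type*} [Fintype ι] [DecidableEq ι] {r : ℕ}
  (A : Fin r → Matrix ι ι 𝕂)

theorem toEuclideanCLM_diagonal_single_one (b : ι) (v : EuclideanSpace 𝕂 ι) :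
    toEuclideanCLM (𝕜 := 𝕂) (diagonal (Pi.single b 1)) v = v b • EuclideanSpace.single b 1 := by
  ext a
  by_cases h : a = b <;> simp [mulVec_diagonal, h]

theorem eq_top_of_single_mem {V : Submodule 𝕂 (EuclideanSpace 𝕂 ι)}
    (h : ∀ i, EuclideanSpace.single i (1 : 𝕂) ∈ V) : V = ⊤ := by
  rw [eq_top_iff, ← (EuclideanSpace.basisFun ι 𝕂).toBasis.span_eq, Submodule.span_le]
  rintro _ ⟨i, rfl⟩
  simpa using h i

@[simp]
theorem wordProd_zero (z : Fin 0 → Fin r) : wordProd A z = 1 := by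
  simp [wordProd]

theorem wordProd_succ {m : ℕ} (z : Fin (m + 1) → Fin r) :
    wordProd A z = A (z (Fin.last m)) * wordProd A (z ∘ Fin.castSucc) := by
  rw [wordProd, wordProd, List.ofFn_succ', List.concat_eq_append, List.reverse_append]
  simp

theorem toEuclideanCLM_wordProd_mem {V : Submodule 𝕂 (EuclideanSpace 𝕂 ι)}
    (hV : ∀ i, ∀ v ∈ V, toEuclideanCLM (𝕜 := 𝕂) (A i) v ∈ V) {m : ℕ} (z : Fin m → Fin r)
    {v : EuclideanSpace 𝕂 ι} (hv : v ∈ V) : toEuclideanCLM (𝕜 := 𝕂) (wordProd A z) v ∈ V := by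
  induction m with
  | zero => simpa using hv
  | succ m ih =>
    rw [wordProd_succ, map_mul, mul_apply_eq_comp]
    exact hV _ _ (ih _)

theorem apply_wordProd_le_prod {N : EuclideanSpace 𝕂 ι → ℝ} {γ : Fin r → ℝ} (hγ : ∀ j, 0 ≤ γ j)
    (hA : ∀ j v, N (toEuclideanCLM (𝕜 := 𝕂) (A j) v) ≤ γ j * N v) {m : ℕ} (z : Fin m → Fin r)
    (v : EuclideanSpace 𝕂 ι) :
    N (toEuclideanCLM (𝕜 := 𝕂) (wordProd A z) v) ≤ (∏ k, γ (z k)) * N v := by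
  induction m with
  | zero => simp
  | succ m ih =>
    rw [wordProd_succ, map_mul, mul_apply_eq_comp, Fin.prod_univ_castSucc,
      mul_comm (∏ _, _), mul_assoc]
    exact (hA _ _).trans (mul_le_mul_of_nonneg_left (ih _) (hγ _))

theorem jsr_eq_one (hle : ∀ m (z : Fin m → Fin r), eNorm (wordProd A z) ≤ 1)
    (hge : ∀ m, ∃ z : Fin m → Fin r, 1 ≤ eNorm (wordProd A z)) : jsr A = 1 := by
  have hsup : ∀ m, ⨆ z : Fin m → Fin r, eNorm (wordProd A z) = 1 := fun m => by
    obtain ⟨z, hz⟩ := hge m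
    have : Nonempty (Fin m → Fin r) := ⟨z⟩
    exact le_antisymm (ciSup_le (hle m)) (le_ciSup_of_le (Set.finite_range _).bddAbove z hz)
  simp [jsr, hsup]

end WordProd

section WeightedShift

variable {𝕂 : Type*} [RCLike 𝕂] {G : Type*} [AddGroup G] [DecidableEq G]

def weightedShift (d : G) (t : G → 𝕂) : Matrix G G 𝕂 :=
  Matrix.of fun a b => if a = b + d then t b else 0

theorem weightedShift_injective (d : G) : Function.Injective (weightedShift (𝕂 := 𝕂) d) :=
  fun t t' h => funext fun b => by simpa [weightedShift] using congr_fun₂ h (b + d) b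

theorem smul_weightedShift (c : 𝕂) (d : G) (t : G → 𝕂) :
    c • weightedShift d t = weightedShift d (c • t) := by
  ext a b
  simp [weightedShift]

theorem weightedShift_zero (t : G → 𝕂) : weightedShift 0 t = diagonal t := by
  ext a b
  by_cases h : a = b <;> simp [weightedShift, diagonal, h]

variable [Fintype G]

theorem weightedShift_mul (d d' : G) (t t' : G → 𝕂) :
    weightedShift d t * weightedShift d' t' =
      weightedShift (d' + d) (fun b => t (b + d') * t' b) := by
  ext a b
  simp only [weightedShift, mul_apply, of_apply, ← add_assoc]
  rw [Finset.sum_eq_single (b + d')] <;> aesop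

theorem weightedShift_eq_permMatrix_mul_diagonal (d : G) (t : G → 𝕂) :
    weightedShift d t = Equiv.Perm.permMatrix 𝕂 (Equiv.subRight d) * diagonal t := by
  ext a b
  simp [weightedShift, mul_diagonal, PEquiv.toMatrix_apply, sub_eq_iff_eq_add]

theorem eNorm_weightedShift_le_one {d : G} {t : G → 𝕂} (ht : ∀ b, ‖t b‖ ≤ 1) :
    eNorm (weightedShift d t) ≤ 1 := by
  open scoped Matrix.Norms.L2Operator in
  calc eNorm (weightedShift d t)
      = ‖Equiv.Perm.permMatrix 𝕂 (Equiv.subRight d) * diagonal t‖ := by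
        rw [weightedShift_eq_permMatrix_mul_diagonal]; rfl
    _ ≤ ‖Equiv.Perm.permMatrix 𝕂 (Equiv.subRight d)‖ * ‖(diagonal t : Matrix G G 𝕂)‖ :=
        l2_opNorm_mul _ _
    _ ≤ 1 * 1 := by
        gcongr
        · exact permMatrix_l2_opNorm_le _
        · rw [l2_opNorm_diagonal]; exact pi_norm_le_iff_of_nonneg zero_le_one |>.2 ht
    _ = 1 := one_mul 1

theorem toEuclideanCLM_weightedShift_single (d : G) (t : G → 𝕂) (b : G) (x : 𝕂) :
    toEuclideanCLM (𝕜 := 𝕂) (weightedShift d t) (EuclideanSpace.single b x) =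
      EuclideanSpace.single (b + d) (t b * x) := by
  ext a
  simp [weightedShift, EuclideanSpace.single, mulVec, dotProduct]

theorem one_le_eNorm_weightedShift {d : G} {t : G → 𝕂} {b : G} (hb : t b = 1) :
    1 ≤ eNorm (weightedShift d t) := by
  simpa [eNorm, toEuclideanCLM_weightedShift_single, hb] using
    (toEuclideanCLM (𝕜 := 𝕂) (weightedShift d t)).le_opNorm (EuclideanSpace.single b 1)

theorem wordProd_weightedShift {r : ℕ} (g : G) (t : Fin r → G → 𝕂) {m : ℕ} (z : Fin m → Fin r) :
    wordProd (fun j => weightedShift g (t j)) z =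
      weightedShift (m • g) (fun b => ∏ k : Fin m, t (z k) (b + (k : ℕ) • g)) := by
  induction m with
  | zero => ext a b; simp [weightedShift, one_apply]
  | succ m ih =>
    rw [wordProd_succ, ih, weightedShift_mul, succ_nsmul]
    congr 1
    funext b
    simp [Fin.prod_univ_castSucc, mul_comm]

end WeightedShift

section PrimitiveWord

open Fin.NatCast

variable {r n : ℕ}

theorem rotEquiv_of_forall_eq_add {z ω : Fin n → Fin r} {b : Fin n}
    (h : ∀ k, z k = ω (b + k)) : RotEquiv z ω :=
  ⟨b, fun k => by rw [h, add_comm]; rfl⟩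

variable [NeZero n]

theorem isPowerOfShorter_of_periodic {ω : Fin n → Fin r} {d : Fin n} (hd : d ≠ 0)
    (h : Function.Periodic ω d) : IsPowerOfShorter ω := by
  set f : ℕ → Fin r := fun j => ω j
  have hfn : Function.Periodic f n := fun x => by simp [f]
  have hfd : Function.Periodic f d := fun x => by simpa [f] using h x
  set q := Nat.gcd d n
  have hq0 : 0 < q := Nat.gcd_pos_of_pos_right _ (NeZero.pos n)
  have hqn : q < n :=
    (Nat.le_of_dvd (Fin.pos_iff_ne_zero.2 hd) (Nat.gcd_dvd_left _ _)).trans_lt d.isLt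
  refine ⟨q, hq0, hqn, Nat.gcd_dvd_right _ _, fun j => ?_⟩
  have hj := (hfd.nat_gcd hfn).map_mod_nat j
  simp only [f, Fin.cast_val_eq_self] at hj
  rw [← hj]
  congr 1
  ext
  exact Nat.mod_eq_of_lt ((Nat.mod_lt _ hq0).trans hqn)

theorem eq_zero_of_periodic {ω : Fin n → Fin r} (hω : ¬ IsPowerOfShorter ω) {d : Fin n}
    (h : Function.Periodic ω d) : d = 0 := by
  by_contra hd
  exact hω (isPowerOfShorter_of_periodic hd h)

end PrimitiveWord

theorem norm_inv_natCast_add_two_le {𝕂 : Type*} [RCLike 𝕂] (k : ℕ) :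
    ‖((k : 𝕂) + 2)⁻¹‖ ≤ 2⁻¹ := by
  rw [norm_inv, show (k : 𝕂) + 2 = ((k + 2 : ℕ) : 𝕂) by push_cast; rfl, RCLike.norm_natCast]
  exact inv_anti₀ two_pos (by simp)

theorem inv_natCast_add_two_ne_one {𝕂 : Type*} [RCLike 𝕂] (k : ℕ) : ((k : 𝕂) + 2)⁻¹ ≠ 1 :=
  fun h => by
    have := norm_inv_natCast_add_two_le (𝕂 := 𝕂) k
    rw [h, norm_one] at this
    norm_num at this

section ShiftTuple

open Fin.NatCast

variable {𝕂 : Type*} [RCLike 𝕂] {r n : ℕ} [NeZero n] (ω : Fin n → Fin r)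

/-- A missing letter `j` acts as `(j + 2)⁻¹` times the letter `ω 0`: the distinct scalars keep
the tuple injective, and their size `≤ 1 / 2` makes every word through a missing letter a strict
contraction. -/
def letterWeight (j : Fin r) (b : Fin n) : 𝕂 :=
  if j ∈ Set.range ω then (if ω b = j then 1 else 0)
  else ((j : 𝕂) + 2)⁻¹ * (if ω b = ω 0 then 1 else 0)

def shiftTuple (j : Fin r) : Matrix (Fin n) (Fin n) 𝕂 :=
  weightedShift 1 (letterWeight ω j)

variable {ω}

theorem letterWeight_self (b : Fin n) : letterWeight (𝕂 := 𝕂) ω (ω b) b = 1 := by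
  simp [letterWeight]

theorem eq_of_letterWeight_ne_zero {j : Fin r} (hj : j ∈ Set.range ω) {b : Fin n}
    (h : letterWeight (𝕂 := 𝕂) ω j b ≠ 0) : ω b = j := by
  by_contra hb
  simp [letterWeight, hj, hb] at h

theorem letterWeight_eq_one_iff {j : Fin r} {b : Fin n} :
    letterWeight (𝕂 := 𝕂) ω j b = 1 ↔ ω b = j := by
  unfold letterWeight
  split_ifs with hj hb hb
  · simp [hb]
  · simp [hb]
  · rw [mul_one]
    exact iff_of_false (inv_natCast_add_two_ne_one _) fun h => hj ⟨b, h⟩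
  · simpa using fun h => hj ⟨b, h⟩

theorem norm_letterWeight_le_one (j : Fin r) (b : Fin n) :
    ‖letterWeight (𝕂 := 𝕂) ω j b‖ ≤ 1 := by
  unfold letterWeight
  split_ifs
  · simp
  · simp
  · simpa using (norm_inv_natCast_add_two_le (𝕂 := 𝕂) j).trans (by norm_num)
  · simp

theorem shiftTuple_of_not_mem_range {j : Fin r} (hj : j ∉ Set.range ω) :
    shiftTuple (𝕂 := 𝕂) ω j = ((j : 𝕂) + 2)⁻¹ • shiftTuple ω (ω 0) := by
  rw [shiftTuple, shiftTuple, smul_weightedShift]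
  congr 1
  ext b
  simp [letterWeight, hj]

theorem wordProd_shiftTuple {m : ℕ} (z : Fin m → Fin r) :
    wordProd (shiftTuple (𝕂 := 𝕂) ω) z =
      weightedShift (m • 1) (fun b => ∏ k : Fin m, letterWeight ω (z k) (b + (k : ℕ) • 1)) :=
  wordProd_weightedShift 1 (letterWeight ω) z

theorem wordProd_shiftTuple_of_length (z : Fin n → Fin r) :
    wordProd (shiftTuple (𝕂 := 𝕂) ω) z =
      diagonal (fun b => ∏ k, letterWeight ω (z k) (b + k)) := by
  simp [wordProd_shiftTuple, weightedShift_zero]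

theorem eq_of_prod_letterWeight_ne_zero {z : Fin n → Fin r} (hz : ∀ k, z k ∈ Set.range ω)
    {b : Fin n} (h : ∏ k, letterWeight (𝕂 := 𝕂) ω (z k) (b + k) ≠ 0) (k : Fin n) :
    ω (b + k) = z k :=
  eq_of_letterWeight_ne_zero (hz k) (Finset.prod_ne_zero_iff.1 h k (Finset.mem_univ k))

theorem wordProd_shiftTuple_rotate (hω : ¬ IsPowerOfShorter ω) (b : Fin n) :
    wordProd (shiftTuple (𝕂 := 𝕂) ω) (fun k => ω (b + k)) = diagonal (Pi.single b 1) := by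
  rw [wordProd_shiftTuple_of_length]
  congr 1
  funext b'
  by_cases hb : b' = b
  · subst hb
    simp [letterWeight_self]
  rw [Pi.single_eq_of_ne hb]
  by_contra h
  have hper : Function.Periodic ω (b' - b) := fun x => by
    have := eq_of_prod_letterWeight_ne_zero (fun k => ⟨_, rfl⟩) h (x - b)
    rw [show x + (b' - b) = b' + (x - b) by abel, this, add_sub_cancel]
  exact hb (sub_eq_zero.1 (eq_zero_of_periodic hω hper))

theorem jsr_shiftTuple : jsr (shiftTuple (𝕂 := 𝕂) ω) = 1 := by
  refine jsr_eq_one _ (fun m z => ?_) (fun m => ⟨fun k => ω ((k : ℕ) • 1), ?_⟩)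
  · rw [wordProd_shiftTuple]
    refine eNorm_weightedShift_le_one fun b => ?_
    rw [norm_prod]
    exact Finset.prod_le_one (fun _ _ => norm_nonneg _) fun _ _ => norm_letterWeight_le_one _ _
  · rw [wordProd_shiftTuple]
    exact one_le_eNorm_weightedShift (b := 0) (by simp [letterWeight_self])

theorem IsBarabanov.apply_shiftTuple_le {N : EuclideanSpace 𝕂 (Fin n) → ℝ}
    (hN : IsBarabanov (shiftTuple ω) N) (j : Fin r) (v : EuclideanSpace 𝕂 (Fin n)) :
    N (toEuclideanCLM (𝕜 := 𝕂) (shiftTuple ω j) v) ≤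
      (if j ∈ Set.range ω then 1 else 2⁻¹) * N v := by
  have hle : ∀ i v, N (toEuclideanCLM (𝕜 := 𝕂) (shiftTuple ω i) v) ≤ N v := fun i v => by
    simpa [jsr_shiftTuple] using hN.apply_le i v
  split_ifs with hj
  · simpa using hle j v
  · rw [shiftTuple_of_not_mem_range hj, map_smul, _root_.smul_apply, hN.1.2.1]
    exact mul_le_mul (norm_inv_natCast_add_two_le _) (hle _ v) (hN.1.nonneg _) (by norm_num)

theorem wordProd_shiftTuple_eq_zero {z : Fin n → Fin r} (hz : ∀ k, z k ∈ Set.range ω)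
    (hzω : ¬ RotEquiv z ω) : wordProd (shiftTuple (𝕂 := 𝕂) ω) z = 0 := by
  rw [wordProd_shiftTuple_of_length, ← diagonal_zero]
  congr 1
  funext b
  by_contra h
  exact hzω (rotEquiv_of_forall_eq_add fun k => (eq_of_prod_letterWeight_ne_zero hz h k).symm)

theorem strongFinHyp_shiftTuple : StrongFinHyp (shiftTuple (𝕂 := 𝕂) ω) ω := by
  intro N hN z hz
  rw [jsr_shiftTuple, one_pow]
  refine (opNormWrt_le (by norm_num : (0 : ℝ) ≤ 2⁻¹) fun v hv => ?_).trans_lt (by norm_num)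
  by_cases hzω : ∀ k, z k ∈ Set.range ω
  · simp [wordProd_shiftTuple_eq_zero hzω hz, hN.1.map_zero]
  obtain ⟨k₀, hk₀⟩ := not_forall.1 hzω
  have hγ : ∏ k, (if z k ∈ Set.range ω then (1 : ℝ) else 2⁻¹) ≤ 2⁻¹ := by
    refine (Finset.prod_le_prod_of_subset_of_le_one (Finset.subset_univ {k₀})
      (fun _ _ => by split_ifs <;> norm_num) (fun _ _ _ => by split_ifs <;> norm_num)).trans ?_
    rw [Finset.prod_singleton, if_neg hk₀]
  calc N (toEuclideanCLM (𝕜 := 𝕂) (wordProd (shiftTuple ω) z) v)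
      ≤ (∏ k, (if z k ∈ Set.range ω then (1 : ℝ) else 2⁻¹)) * N v :=
        apply_wordProd_le_prod _ (fun _ => by split_ifs <;> norm_num) hN.apply_shiftTuple_le z v
    _ ≤ 2⁻¹ * 1 := mul_le_mul hγ hv (hN.1.nonneg _) (by norm_num)
    _ = 2⁻¹ := mul_one _

theorem rank_wordProd_shiftTuple (hω : ¬ IsPowerOfShorter ω) :
    (wordProd (shiftTuple (𝕂 := 𝕂) ω) ω).rank = 1 := by
  have h := wordProd_shiftTuple_rotate (𝕂 := 𝕂) hω 0
  simp only [zero_add] at h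
  rw [h, rank_diagonal, Fintype.card_eq_one_iff]
  exact ⟨⟨0, by simp⟩, fun ⟨x, hx⟩ => Subtype.ext (by simpa [Pi.single_apply] using hx)⟩

theorem shiftTuple_injective : Function.Injective (shiftTuple (𝕂 := 𝕂) ω) := by
  intro j j' h
  have hw := weightedShift_injective 1 h
  by_cases hj : j ∈ Set.range ω
  · obtain ⟨b, rfl⟩ := hj
    exact letterWeight_eq_one_iff.1 (hw ▸ letterWeight_self b)
  by_cases hj' : j' ∈ Set.range ω
  · obtain ⟨b, rfl⟩ := hj'
    exact (letterWeight_eq_one_iff.1 (hw ▸ letterWeight_self b)).symm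
  simpa [letterWeight, hj, hj', Fin.val_inj] using congr_fun hw 0

theorem isIrreducible_shiftTuple (hω : ¬ IsPowerOfShorter ω) :
    IsIrreducible (shiftTuple (𝕂 := 𝕂) ω) := by
  intro V hV
  refine (eq_or_ne V ⊥).imp_right fun hV0 => ?_
  obtain ⟨v, hvV, hv0⟩ := (Submodule.ne_bot_iff V).1 hV0
  obtain ⟨b, hb⟩ : ∃ b, v b ≠ 0 := by
    by_contra! h
    exact hv0 (PiLp.ext h)
  have hb_mem : EuclideanSpace.single b (1 : 𝕂) ∈ V := by
    have := toEuclideanCLM_wordProd_mem _ hV (fun k => ω (b + k)) hvV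
    rw [wordProd_shiftTuple_rotate hω, toEuclideanCLM_diagonal_single_one] at this
    exact (V.smul_mem_iff hb).1 this
  have hstep : ∀ x, EuclideanSpace.single x (1 : 𝕂) ∈ V →
      EuclideanSpace.single (x + 1) (1 : 𝕂) ∈ V := fun x hx => by
    simpa [shiftTuple, toEuclideanCLM_weightedShift_single, letterWeight_self] using hV (ω x) _ hx
  have hall : ∀ k : ℕ, EuclideanSpace.single (b + k • 1) (1 : 𝕂) ∈ V := by
    intro k
    induction k with
    | zero => simpa using hb_mem
    | succ k ih => simpa [succ_nsmul, add_assoc] using hstep _ ih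
  refine eq_top_of_single_mem fun a => ?_
  simpa using hall (a - b : Fin n)

end ShiftTuple

end JSRPaper

open JSRPaper in
theorem stmt_1_general {𝕂 : Type*} [RCLike 𝕂] {r n : ℕ} (hn : 0 < n)
    (ω : Fin n → Fin r) (hω : ¬ IsPowerOfShorter ω) :
    ∃ A : Fin r → Matrix (Fin n) (Fin n) 𝕂,
      IsIrreducible A ∧ StrongFinHyp A ω ∧ Function.Injective A ∧
        (wordProd A ω).rank = 1 := by
  have : NeZero n := ⟨hn.ne'⟩
  exact ⟨shiftTuple ω, isIrreducible_shiftTuple hω, strongFinHyp_shiftTuple,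
    shiftTuple_injective, rank_wordProd_shiftTuple hω⟩

open JSRPaper in
/-- **Proposition 1.** If the word `ω ∈ {1,…,r}^n` is not a power of a shorter word,
then there is an irreducible `r`-tuple of `n × n` matrices over `𝕂` satisfying the
strong finiteness hypothesis with characteristic word `ω`, with pairwise distinct
matrices, such that `A_{ω_n} ⋯ A_{ω_1}` has rank one. -/
theorem stmt_1 {𝕂 : Type*} [RCLike 𝕂] {r n : ℕ} (hr : 0 < r) (hn : 0 < n)
    (ω : Fin n → Fin r) (hω : ¬ IsPowerOfShorter ω) :
    ∃ A : Fin r → Matrix (Fin n) (Fin n) 𝕂,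
      IsIrreducible A ∧ StrongFinHyp A ω ∧ Function.Injective A ∧
        (wordProd A ω).rank = 1 :=
  stmt_1_general hn ω hω
end
end

section
/- Let 𝕂 be ℝ or ℂ and let r, d ≥ 2 be integers. There exists a nonempty open subset of the space Mat_d(𝕂)^r of r-tuples of d×d matrices over 𝕂 (with the metric d(𝒜,ℬ) = max_{1≤i≤r} ‖A_i − B_i‖) on which every r-tuple satisfies the finiteness property. -/
open Filter Topology

noncomputable section

/-!
Take `A 0` close to a rank-one projection `φ(·) e` and the other matrices small. A Banach
fixed-point argument gives `A 0` an eigenvector `v` near `e` and a left eigenvector `c` near `φ`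
for a common eigenvalue `μ` near `1`, and `A 0` shrinks `ker c` by a factor below `‖μ‖`. In the
norm `max ‖c x‖ ‖x - c x • v‖` of the splitting `𝕜 v ⊕ ker c` every matrix of the tuple then has
norm at most `‖μ‖`, so `ϱ(𝒜) ≤ ‖μ‖ ≤ ρ(A 0) ≤ ϱ(𝒜)` and the one-letter word `0` realises the
joint spectral radius.
-/

open Metric

theorem le_of_forall_pow_le_mul_pow {a b C : ℝ} (hb : 0 ≤ b)
    (h : ∀ n : ℕ, 0 < n → a ^ n ≤ C * b ^ n) : a ≤ b := by
  rcases hb.eq_or_lt with rfl | hb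
  · simpa using h 1 one_pos
  by_contra! hba
  obtain ⟨n, hn⟩ := pow_unbounded_of_one_lt C ((one_lt_div hb).2 hba)
  have hab : 1 ≤ a / b := ((one_lt_div hb).2 hba).le
  refine (h (n + 1) n.succ_pos).not_gt ?_
  calc C * b ^ (n + 1) < (a / b) ^ n * b ^ (n + 1) := by gcongr
    _ ≤ (a / b) ^ (n + 1) * b ^ (n + 1) :=
      mul_le_mul_of_nonneg_right (pow_le_pow_right₀ hab n.le_succ) (by positivity)
    _ = a ^ (n + 1) := by rw [div_pow, div_mul_cancel₀ _ (pow_ne_zero _ hb.ne')]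

section Operator

variable {𝕜 E : Type*} [RCLike 𝕜] [NormedAddCommGroup E] [NormedSpace 𝕜 E]

/-- The fixed points `x` of this map with `φ x = 1` are the eigenvectors of `φ.smulRight e + R`
normalised by `φ`. Its derivative at `e` vanishes when `R = 0`, so it contracts near `e` when `R`
is small. -/
def eigenIteration (φ : StrongDual 𝕜 E) (e : E) (R : E →L[𝕜] E) (x : E) : E :=
  e + R x - φ (R x) • x

variable {e : E} {φ : StrongDual 𝕜 E}

theorem mapsTo_eigenIteration (he : ‖e‖ ≤ 1) (hφ : ‖φ‖ ≤ 1) (hφe : φ e = 1) {R : E →L[𝕜] E}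
    (hR : ‖R‖ ≤ 1 / 12) :
    Set.MapsTo (eigenIteration φ e R) ({x | φ x = 1} ∩ closedBall e (1 / 4))
      ({x | φ x = 1} ∩ closedBall e (1 / 4)) := by
  rintro x ⟨hφx, hx⟩
  have hx_norm : ‖x‖ ≤ 5 / 4 := by linarith [norm_le_of_mem_closedBall hx]
  refine ⟨by simp [eigenIteration, hφe, hφx.out], mem_closedBall_iff_norm.2 ?_⟩
  calc ‖eigenIteration φ e R x - e‖ = ‖R x - φ (R x) • x‖ := by
        simp only [eigenIteration]; congr 1; abel
    _ ≤ ‖R x‖ + ‖φ (R x)‖ * ‖x‖ := (norm_sub_le _ _).trans_eq (by rw [norm_smul])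
    _ ≤ 1 / 12 * ‖x‖ + 1 / 12 * ‖x‖ * ‖x‖ := by
        gcongr
        · exact R.le_of_opNorm_le hR x
        · exact φ.le_of_opNorm_le hφ _ |>.trans (by simpa using R.le_of_opNorm_le hR x)
    _ ≤ 1 / 4 := by nlinarith [norm_nonneg x]

theorem lipschitzOnWith_eigenIteration (he : ‖e‖ ≤ 1) (hφ : ‖φ‖ ≤ 1) {R : E →L[𝕜] E}
    (hR : ‖R‖ ≤ 1 / 12) :
    LipschitzOnWith (1 / 2) (eigenIteration φ e R) (closedBall e (1 / 4)) := by
  have hφR (x : E) : ‖φ (R x)‖ ≤ 1 / 12 * ‖x‖ :=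
    φ.le_of_opNorm_le hφ _ |>.trans (by simpa using R.le_of_opNorm_le hR x)
  refine LipschitzOnWith.of_dist_le_mul fun x hx y hy => ?_
  have hx_norm : ‖x‖ ≤ 5 / 4 := by linarith [norm_le_of_mem_closedBall hx]
  have hy_norm : ‖y‖ ≤ 5 / 4 := by linarith [norm_le_of_mem_closedBall hy]
  have hxy : eigenIteration φ e R x - eigenIteration φ e R y =
      R (x - y) - φ (R x) • (x - y) - φ (R (x - y)) • y := by
    simp only [eigenIteration, map_sub, sub_smul, smul_sub]; abel
  rw [dist_eq_norm, dist_eq_norm, hxy]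
  calc ‖R (x - y) - φ (R x) • (x - y) - φ (R (x - y)) • y‖
      ≤ ‖R (x - y)‖ + ‖φ (R x)‖ * ‖x - y‖ + ‖φ (R (x - y))‖ * ‖y‖ := by
        rw [← norm_smul, ← norm_smul]
        exact (norm_sub_le _ _).trans (add_le_add_left (norm_sub_le _ _) _)
    _ ≤ 1 / 12 * ‖x - y‖ + 1 / 12 * ‖x‖ * ‖x - y‖ + 1 / 12 * ‖x - y‖ * ‖y‖ := by
        gcongr
        · exact R.le_of_opNorm_le hR _
        · exact hφR x
        · exact hφR _
    _ ≤ ((1 / 2 : NNReal) : ℝ) * ‖x - y‖ := by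
        push_cast; nlinarith [norm_nonneg (x - y)]

theorem exists_eigenvector_of_norm_sub_smulRight_le [CompleteSpace E] (he : ‖e‖ ≤ 1)
    (hφ : ‖φ‖ ≤ 1) (hφe : φ e = 1) {T : E →L[𝕜] E} (hT : ‖T - φ.smulRight e‖ ≤ 1 / 12) :
    ∃ (μ : 𝕜) (v : E), T v = μ • v ∧ φ v = 1 ∧ ‖v - e‖ ≤ 1 / 4 ∧ ‖μ - 1‖ ≤ 1 / 4 := by
  set R := T - φ.smulRight e
  have hmaps := mapsTo_eigenIteration he hφ hφe hT
  have hcontr : ContractingWith (1 / 2) (hmaps.restrict _ _ _) :=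
    ⟨by rw [one_div, NNReal.inv_lt_one_iff two_ne_zero]; norm_num,
      ((lipschitzOnWith_eigenIteration he hφ hT).mono Set.inter_subset_right).mapsToRestrict hmaps⟩
  have hclosed : IsClosed ({x | φ x = 1} ∩ closedBall e (1 / 4)) :=
    (isClosed_eq φ.continuous continuous_const).inter isClosed_closedBall
  obtain ⟨v, ⟨hφv, hv⟩, hfix, -⟩ := hcontr.exists_fixedPoint' hclosed.isComplete hmaps
    ⟨hφe, mem_closedBall_self (by norm_num)⟩ (edist_ne_top _ _)
  refine ⟨1 + φ (R v), v, ?_, hφv, mem_closedBall_iff_norm.1 hv, ?_⟩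
  · have hTv : T v = φ v • e + R v := by simp [R]
    rw [hTv, hφv.out, one_smul, add_smul, one_smul]
    exact sub_eq_iff_eq_add.1 hfix.eq
  · rw [add_sub_cancel_left]
    have := φ.le_of_opNorm_le hφ _ |>.trans (by simpa using R.le_of_opNorm_le hT v)
    linarith [norm_le_of_mem_closedBall hv]

theorem exists_left_eigenvector_of_norm_sub_smulRight_le (he : ‖e‖ ≤ 1) (hφ : ‖φ‖ ≤ 1)
    (hφe : φ e = 1) {T : E →L[𝕜] E} (hT : ‖T - φ.smulRight e‖ ≤ 1 / 12) :
    ∃ (μ : 𝕜) (ψ : StrongDual 𝕜 E), ψ.comp T = μ • ψ ∧ ψ e = 1 ∧ ‖ψ - φ‖ ≤ 1 / 4 := by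
  set evalE := ContinuousLinearMap.apply 𝕜 𝕜 e
  have hevalE : ‖evalE‖ ≤ 1 :=
    ContinuousLinearMap.opNorm_le_bound _ zero_le_one fun ψ =>
      (ψ.le_opNorm e).trans (by simpa [evalE] using mul_le_mul_of_nonneg_left he (norm_nonneg ψ))
  have hdual : ‖(ContinuousLinearMap.compL 𝕜 E E 𝕜).flip T - evalE.smulRight φ‖ ≤ 1 / 12 := by
    refine ContinuousLinearMap.opNorm_le_bound _ (by norm_num) fun ψ => ?_
    have : ((ContinuousLinearMap.compL 𝕜 E E 𝕜).flip T - evalE.smulRight φ) ψ =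
        ψ.comp (T - φ.smulRight e) := by
      ext x; simp [evalE, mul_comm]
    rw [this, mul_comm]
    exact (ψ.opNorm_comp_le _).trans (mul_le_mul_of_nonneg_left hT (norm_nonneg ψ))
  obtain ⟨μ, ψ, hψ, hψe, hψφ, -⟩ :=
    exists_eigenvector_of_norm_sub_smulRight_le hφ hevalE hφe hdual
  exact ⟨μ, ψ, hψ, hψe, hψφ⟩

theorem norm_apply_le_of_apply_eq_zero (he : ‖e‖ ≤ 1) {T : E →L[𝕜] E}
    (hT : ‖T - φ.smulRight e‖ ≤ 1 / 12) {ψ : StrongDual 𝕜 E} (hψφ : ‖ψ - φ‖ ≤ 1 / 4) {y : E}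
    (hy : ψ y = 0) : ‖T y‖ ≤ 1 / 3 * ‖y‖ := by
  have hφy : ‖φ y‖ ≤ 1 / 4 * ‖y‖ := by
    have := (φ - ψ).le_of_opNorm_le (show ‖φ - ψ‖ ≤ 1 / 4 by rwa [norm_sub_rev]) y
    simpa [hy] using this
  have hTy : T y = φ y • e + (T - φ.smulRight e) y := by simp
  calc ‖T y‖ ≤ ‖φ y‖ * ‖e‖ + 1 / 12 * ‖y‖ := by
        rw [hTy, ← norm_smul]
        exact (norm_add_le _ _).trans
          (add_le_add le_rfl ((T - φ.smulRight e).le_of_opNorm_le hT y))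
    _ ≤ 1 / 4 * ‖y‖ * 1 + 1 / 12 * ‖y‖ := by gcongr
    _ = 1 / 3 * ‖y‖ := by ring

theorem exists_dominant_eigendata_of_norm_sub_smulRight_le [CompleteSpace E] (he : ‖e‖ ≤ 1)
    (hφ : ‖φ‖ ≤ 1) (hφe : φ e = 1) {T : E →L[𝕜] E} (hT : ‖T - φ.smulRight e‖ ≤ 1 / 12) :
    ∃ (μ : 𝕜) (v : E) (c : StrongDual 𝕜 E), T v = μ • v ∧ c.comp T = μ • c ∧ c v = 1 ∧
      3 / 4 ≤ ‖μ‖ ∧ ‖v‖ ≤ 5 / 4 ∧ ‖c‖ ≤ 2 ∧ ∀ y, c y = 0 → ‖T y‖ ≤ ‖μ‖ * ‖y‖ := by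
  obtain ⟨μ, v, hv, -, hve, hμ⟩ := exists_eigenvector_of_norm_sub_smulRight_le he hφ hφe hT
  obtain ⟨μ', ψ, hψ, hψe, hψφ⟩ := exists_left_eigenvector_of_norm_sub_smulRight_le he hφ hφe hT
  have hψ_norm : ‖ψ‖ ≤ 5 / 4 := by linarith [norm_le_norm_add_norm_sub' ψ φ, norm_sub_rev ψ φ]
  have hψv : 11 / 16 ≤ ‖ψ v‖ := by
    have : ‖ψ (v - e)‖ ≤ 5 / 4 * (1 / 4) :=
      (ψ.le_opNorm _).trans (mul_le_mul hψ_norm hve (norm_nonneg _) (by norm_num))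
    rw [map_sub, hψe] at this
    linarith [norm_sub_norm_le (1 : 𝕜) (ψ v), norm_sub_rev (1 : 𝕜) (ψ v), norm_one (α := 𝕜)]
  have hψv0 : ψ v ≠ 0 := norm_pos_iff.1 (by linarith)
  obtain rfl : μ' = μ := by
    have := congrArg (· v) hψ
    simp only [ContinuousLinearMap.comp_apply, hv, map_smul, smul_apply, smul_eq_mul] at this
    exact (mul_right_cancel₀ hψv0 this).symm
  have hμ_norm : 3 / 4 ≤ ‖μ'‖ := by
    linarith [norm_sub_norm_le (1 : 𝕜) μ', norm_sub_rev μ' 1, norm_one (α := 𝕜)]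
  refine ⟨μ', v, (ψ v)⁻¹ • ψ, hv, ?_, by simp [hψv0], hμ_norm,
    by linarith [norm_le_norm_add_norm_sub' v e], ?_, fun y hy => ?_⟩
  · rw [ContinuousLinearMap.smul_comp, hψ, smul_comm]
  · rw [norm_smul, norm_inv]
    calc ‖ψ v‖⁻¹ * ‖ψ‖ ≤ (11 / 16)⁻¹ * (5 / 4) := by gcongr
      _ ≤ 2 := by norm_num
  · have hψy : ψ y = 0 := by simpa [hψv0] using hy
    exact (norm_apply_le_of_apply_eq_zero he hT hψφ hψy).trans
      (by nlinarith [norm_nonneg y])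

/-- The norm adapted to the splitting `E = 𝕜 v ⊕ ker c` (when `c v = 1`). -/
def splitNorm (c : StrongDual 𝕜 E) (v x : E) : ℝ :=
  max ‖c x‖ ‖x - c x • v‖

theorem norm_le_splitNorm (c : StrongDual 𝕜 E) (v x : E) :
    ‖x‖ ≤ (1 + ‖v‖) * splitNorm c v x := by
  have h₁ : ‖c x‖ ≤ splitNorm c v x := le_max_left _ _
  have h₂ : ‖x - c x • v‖ ≤ splitNorm c v x := le_max_right _ _
  calc ‖x‖ = ‖(x - c x • v) + c x • v‖ := by rw [sub_add_cancel]
    _ ≤ ‖x - c x • v‖ + ‖c x‖ * ‖v‖ := (norm_add_le _ _).trans_eq (by rw [norm_smul])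
    _ ≤ (1 + ‖v‖) * splitNorm c v x := by nlinarith [norm_nonneg v]

theorem splitNorm_le (c : StrongDual 𝕜 E) (v x : E) :
    splitNorm c v x ≤ (1 + ‖c‖ * (1 + ‖v‖)) * ‖x‖ := by
  have hcx : ‖c x‖ ≤ ‖c‖ * ‖x‖ := c.le_opNorm x
  have := mul_nonneg (mul_nonneg (norm_nonneg c) (norm_nonneg v)) (norm_nonneg x)
  refine max_le (by nlinarith [norm_nonneg x]) ?_
  calc ‖x - c x • v‖ ≤ ‖x‖ + ‖c x‖ * ‖v‖ := (norm_sub_le _ _).trans_eq (by rw [norm_smul])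
    _ ≤ (1 + ‖c‖ * (1 + ‖v‖)) * ‖x‖ := by nlinarith [norm_nonneg v, norm_nonneg x, norm_nonneg c]

theorem splitNorm_apply_le {c : StrongDual 𝕜 E} {v : E} {T : E →L[𝕜] E} {μ : 𝕜}
    (hTv : T v = μ • v) (hcT : c.comp T = μ • c) (hcv : c v = 1)
    (hker : ∀ y, c y = 0 → ‖T y‖ ≤ ‖μ‖ * ‖y‖) (x : E) :
    splitNorm c v (T x) ≤ ‖μ‖ * splitNorm c v x := by
  have hcTx : c (T x) = μ * c x := by simpa using congrArg (· x) hcT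
  have hT_sub : T x - c (T x) • v = T (x - c x • v) := by
    rw [map_sub, map_smul, hTv, hcTx, smul_smul, mul_comm]
  have hc_sub : c (x - c x • v) = 0 := by simp [hcv]
  rw [splitNorm, splitNorm, hT_sub, hcTx, norm_mul, mul_max_of_nonneg _ _ (norm_nonneg μ)]
  exact max_le_max le_rfl (hker _ hc_sub)

theorem norm_list_prod_le {N : E → ℝ} {a b s : ℝ} (ha : 0 ≤ a) (hb : 0 ≤ b) (hs : 0 ≤ s)
    (hle : ∀ x, ‖x‖ ≤ a * N x) (hge : ∀ x, N x ≤ b * ‖x‖) {l : List (E →L[𝕜] E)}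
    (hl : ∀ T ∈ l, ∀ x, N (T x) ≤ s * N x) : ‖l.prod‖ ≤ a * b * s ^ l.length := by
  have hN (x : E) : N (l.prod x) ≤ s ^ l.length * N x := by
    induction l generalizing x with
    | nil => simp
    | cons T l ih =>
      rw [List.prod_cons, mul_apply_eq_comp, List.length_cons, pow_succ']
      calc N (T (l.prod x)) ≤ s * N (l.prod x) := hl T List.mem_cons_self _
        _ ≤ s * (s ^ l.length * N x) :=
          mul_le_mul_of_nonneg_left (ih (fun S hS => hl S (List.mem_cons_of_mem _ hS)) x) hs
        _ = s * s ^ l.length * N x := by ring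
  refine ContinuousLinearMap.opNorm_le_bound _ (by positivity) fun x => ?_
  calc ‖l.prod x‖ ≤ a * (s ^ l.length * (b * ‖x‖)) :=
        (hle _).trans (mul_le_mul_of_nonneg_left
          ((hN x).trans (mul_le_mul_of_nonneg_left (hge x) (by positivity))) ha)
    _ = a * b * s ^ l.length * ‖x‖ := by ring

theorem exists_eigenvector_and_norm_list_prod_le [CompleteSpace E] {e : E}
    {φ : StrongDual 𝕜 E} (he : ‖e‖ ≤ 1) (hφ : ‖φ‖ ≤ 1) (hφe : φ e = 1) {ι : Type*}
    (T : ι → E →L[𝕜] E) (i₀ : ι) (hT₀ : ‖T i₀ - φ.smulRight e‖ ≤ 1 / 12)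
    (hT : ∀ i ≠ i₀, ‖T i‖ ≤ 1 / 20) :
    ∃ μ : 𝕜, (∃ v ≠ 0, T i₀ v = μ • v) ∧
      ∃ C, ∀ l : List ι, ‖(l.map T).prod‖ ≤ C * ‖μ‖ ^ l.length := by
  obtain ⟨μ, v, c, hv, hc, hcv, hμ, hv_norm, hc_norm, hker⟩ :=
    exists_dominant_eigendata_of_norm_sub_smulRight_le he hφ hφe hT₀
  have hv0 : v ≠ 0 := by rintro rfl; simp at hcv
  refine ⟨μ, ⟨v, hv0, hv⟩, (1 + ‖v‖) * (1 + ‖c‖ * (1 + ‖v‖)), fun l => ?_⟩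
  rw [← List.length_map T]
  refine norm_list_prod_le (by positivity) (by positivity) (norm_nonneg μ)
    (norm_le_splitNorm c v) (splitNorm_le c v) fun S hS x => ?_
  obtain ⟨i, -, rfl⟩ := List.mem_map.1 hS
  by_cases hi : i = i₀
  · subst hi; exact splitNorm_apply_le hv hc hcv hker x
  -- The small operators lose at most the factor `(1 + ‖c‖ (1 + ‖v‖)) (1 + ‖v‖) ≤ 99 / 8` when
  -- passing between `splitNorm c v` and `‖·‖`, which `1 / 20` absorbs since `‖μ‖ ≥ 3 / 4`.
  calc splitNorm c v (T i x)
        ≤ (1 + ‖c‖ * (1 + ‖v‖)) * (1 / 20 * ((1 + ‖v‖) * splitNorm c v x)) := by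
        refine (splitNorm_le c v _).trans (mul_le_mul_of_nonneg_left ?_ (by positivity))
        exact (T i).le_of_opNorm_le (hT i hi) x |>.trans
          (mul_le_mul_of_nonneg_left (norm_le_splitNorm c v x) (by norm_num))
    _ ≤ (1 + 2 * (1 + 5 / 4)) * (1 / 20 * ((1 + 5 / 4) * splitNorm c v x)) := by
        have : 0 ≤ splitNorm c v x := (norm_nonneg _).trans (le_max_left _ _)
        gcongr
    _ ≤ ‖μ‖ * splitNorm c v x := by
        have : 0 ≤ splitNorm c v x := (norm_nonneg _).trans (le_max_left _ _)
        nlinarith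

end Operator

namespace JSRPaper

variable {𝕂 : Type*} [RCLike 𝕂] {ι : Type*} [Fintype ι] [DecidableEq ι] {r : ℕ}

theorem wordProd_const (A : Fin r → Matrix ι ι 𝕂) (i : Fin r) (n : ℕ) :
    wordProd A (fun _ : Fin n => i) = A i ^ n := by
  simp [wordProd, List.ofFn_const]

theorem toEuclideanCLM_wordProd (A : Fin r → Matrix ι ι 𝕂) {n : ℕ} (w : Fin n → Fin r) :
    Matrix.toEuclideanCLM (𝕜 := 𝕂) (wordProd A w) =
      (((List.ofFn w).reverse).map fun i => Matrix.toEuclideanCLM (𝕜 := 𝕂) (A i)).prod := by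
  rw [wordProd, map_list_prod, List.map_reverse, List.map_ofFn, List.map_reverse, List.map_ofFn]
  rfl

theorem specRad_le_jsr (A : Fin r → Matrix ι ι 𝕂) (i : Fin r) : specRad (A i) ≤ jsr A := by
  refine le_ciInf fun n => ?_
  have hbdd : BddBelow (Set.range fun k : ℕ+ => eNorm (A i ^ (k : ℕ)) ^ (((k : ℕ) : ℝ)⁻¹)) :=
    ⟨0, by rintro _ ⟨k, rfl⟩; exact Real.rpow_nonneg (norm_nonneg _) _⟩
  refine (ciInf_le hbdd n).trans (Real.rpow_le_rpow (norm_nonneg _) ?_ (by positivity))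
  rw [← wordProd_const]
  exact le_ciSup (f := fun w : Fin n → Fin r => eNorm (wordProd A w))
    (Set.finite_range _).bddAbove (fun _ => i)

theorem jsr_pow_le_iSup (A : Fin r → Matrix ι ι 𝕂) (n : ℕ+) :
    jsr A ^ (n : ℕ) ≤ ⨆ w : Fin n → Fin r, eNorm (wordProd A w) := by
  have hsup : 0 ≤ ⨆ w : Fin n → Fin r, eNorm (wordProd A w) :=
    Real.iSup_nonneg fun _ => norm_nonneg _
  have hbdd : BddBelow (Set.range fun k : ℕ+ =>
      (⨆ w : Fin k → Fin r, eNorm (wordProd A w)) ^ ((k : ℝ)⁻¹)) :=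
    ⟨0, by rintro _ ⟨k, rfl⟩; exact Real.rpow_nonneg (Real.iSup_nonneg fun _ => norm_nonneg _) _⟩
  calc jsr A ^ (n : ℕ) ≤ ((⨆ w : Fin n → Fin r, eNorm (wordProd A w)) ^ ((n : ℝ)⁻¹)) ^ (n : ℕ) :=
        pow_le_pow_left₀ (Real.iInf_nonneg fun _ => Real.rpow_nonneg
          (Real.iSup_nonneg fun _ => norm_nonneg _) _) (ciInf_le hbdd n) _
    _ = ⨆ w : Fin n → Fin r, eNorm (wordProd A w) :=
        Real.rpow_inv_natCast_pow hsup n.ne_zero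

theorem jsr_le_of_eNorm_wordProd_le (A : Fin r → Matrix ι ι 𝕂) {C s : ℝ} (hs : 0 ≤ s)
    (h : ∀ (n : ℕ) (w : Fin n → Fin r), eNorm (wordProd A w) ≤ C * s ^ n) : jsr A ≤ s := by
  have hC : 0 ≤ C := by simpa using (norm_nonneg _).trans (h 0 Fin.elim0)
  refine le_of_forall_pow_le_mul_pow (C := C) hs fun n hn => ?_
  exact (jsr_pow_le_iSup A ⟨n, hn⟩).trans (Real.iSup_le (h n) (by positivity))

theorem norm_le_specRad_of_eigenvector {M : Matrix ι ι 𝕂} {μ : 𝕂} {v : EuclideanSpace 𝕂 ι}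
    (hv0 : v ≠ 0) (hv : Matrix.toEuclideanCLM (𝕜 := 𝕂) M v = μ • v) : ‖μ‖ ≤ specRad M := by
  refine le_ciInf fun k => ?_
  have hMk : Matrix.toEuclideanCLM (𝕜 := 𝕂) (M ^ (k : ℕ)) v = μ ^ (k : ℕ) • v := by
    rw [map_pow]
    clear hv0
    induction (k : ℕ) with
    | zero => simp
    | succ n ih =>
      rw [pow_succ', mul_apply_eq_comp, ih, map_smul, hv, smul_smul, pow_succ', mul_comm]
  have hle : ‖μ‖ ^ (k : ℕ) ≤ eNorm (M ^ (k : ℕ)) := by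
    refine le_of_mul_le_mul_right ?_ (norm_pos_iff.2 hv0)
    have := (Matrix.toEuclideanCLM (𝕜 := 𝕂) (M ^ (k : ℕ))).le_opNorm v
    rwa [hMk, norm_smul, norm_pow] at this
  calc ‖μ‖ = (‖μ‖ ^ (k : ℕ)) ^ (((k : ℕ) : ℝ)⁻¹) :=
        (Real.pow_rpow_inv_natCast (norm_nonneg μ) k.ne_zero).symm
    _ ≤ eNorm (M ^ (k : ℕ)) ^ (((k : ℕ) : ℝ)⁻¹) :=
        Real.rpow_le_rpow (by positivity) hle (by positivity)

theorem finitenessProp_of_specRad_eq_jsr (A : Fin r → Matrix ι ι 𝕂) (i : Fin r)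
    (h : specRad (A i) = jsr A) : FinitenessProp A :=
  ⟨1, one_pos, fun _ => i, by rw [wordProd_const, pow_one, Nat.cast_one, inv_one,
    Real.rpow_one, h]⟩

theorem finitenessProp_of_norm_sub_smulRight_le [NeZero r] {e : EuclideanSpace 𝕂 ι}
    {φ : StrongDual 𝕂 (EuclideanSpace 𝕂 ι)} (he : ‖e‖ ≤ 1) (hφ : ‖φ‖ ≤ 1) (hφe : φ e = 1)
    (A : Fin r → Matrix ι ι 𝕂)
    (hA₀ : ‖Matrix.toEuclideanCLM (𝕜 := 𝕂) (A 0) - φ.smulRight e‖ ≤ 1 / 12)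
    (hA : ∀ i ≠ 0, eNorm (A i) ≤ 1 / 20) : FinitenessProp A := by
  obtain ⟨μ, ⟨v, hv0, hv⟩, C, hC⟩ :=
    exists_eigenvector_and_norm_list_prod_le he hφ hφe
      (fun i => Matrix.toEuclideanCLM (𝕜 := 𝕂) (A i)) 0 hA₀ hA
  refine finitenessProp_of_specRad_eq_jsr A 0 (le_antisymm (specRad_le_jsr A 0) ?_)
  calc jsr A ≤ ‖μ‖ := jsr_le_of_eNorm_wordProd_le A (norm_nonneg μ) fun n w => by
        simpa [eNorm, toEuclideanCLM_wordProd] using hC (List.ofFn w).reverse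
    _ ≤ specRad (A 0) := norm_le_specRad_of_eigenvector hv0 hv

end JSRPaper

open JSRPaper in
/-- For `r, d ≥ 2` there is a nonempty open subset of the space of `r`-tuples of `d × d`
matrices over `𝕂` (metric `d(𝒜,ℬ) = max_i ‖A_i - B_i‖`) on which the finiteness
property holds everywhere. -/
theorem stmt_12 {𝕂 : Type*} [RCLike 𝕂] {r d : ℕ} (hr : 2 ≤ r) (hd : 2 ≤ d) :
    ∃ U : Set (Fin r → Matrix (Fin d) (Fin d) 𝕂),
      U.Nonempty ∧
      (∀ A ∈ U, ∃ ε > (0 : ℝ), ∀ B : Fin r → Matrix (Fin d) (Fin d) 𝕂,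
        (∀ i, eNorm (B i - A i) < ε) → B ∈ U) ∧
      ∀ A ∈ U, FinitenessProp A := by
  have : NeZero r := ⟨by omega⟩
  have : NeZero d := ⟨by omega⟩
  set e : EuclideanSpace 𝕂 (Fin d) := EuclideanSpace.single 0 1
  have he : ‖e‖ = 1 := by simp [e]
  obtain ⟨φ, hφ, hφe⟩ := exists_dual_vector'' 𝕂 e
  rw [he, RCLike.ofReal_one] at hφe
  set T₀ : Fin r → _ := Pi.single 0 (φ.smulRight e)
  set toCLM := fun (A : Fin r → Matrix (Fin d) (Fin d) 𝕂) i => Matrix.toEuclideanCLM (𝕜 := 𝕂) (A i)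
  refine ⟨{A | dist (toCLM A) T₀ < 1 / 20},
    ⟨fun i => (Matrix.toEuclideanCLM (𝕜 := 𝕂)).symm (T₀ i), by simp [toCLM]⟩,
    fun A hA => ?_, fun A hA => ?_⟩
  · refine ⟨1 / 20 - dist (toCLM A) T₀, sub_pos.2 hA, fun B hB => ?_⟩
    have hBA : dist (toCLM B) (toCLM A) < 1 / 20 - dist (toCLM A) T₀ :=
      (dist_pi_lt_iff (sub_pos.2 hA)).2 fun i => by rw [dist_eq_norm, ← map_sub]; exact hB i
    exact (dist_triangle _ (toCLM A) _).trans_lt (by linarith)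
  · have hA_i (i : Fin r) : dist (toCLM A i) (T₀ i) < 1 / 20 :=
      (dist_le_pi_dist _ _ i).trans_lt hA
    refine finitenessProp_of_norm_sub_smulRight_le he.le hφ hφe A ?_ fun i hi => ?_
    · simpa [T₀, toCLM, dist_eq_norm] using (hA_i 0).le.trans (by norm_num)
    · simpa [T₀, toCLM, eNorm, hi] using (hA_i i).le
end
end
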